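/- arXiv:2506.17731 — 2 statements merged into one kernel-verified Lean document; each statement's English description precedes it below -/
import Mathlib

section
/- Let d ≥ 1 and k ∈ ℕ. There exists a constant C = C(d,k) > 0 such that for every N ≥ 1, every function u₀ spectrally localized at scale N, and every admissible monomial operator A of order k, one has ‖A u₀‖_{L²(ℝ^d)} ≤ C N^k ‖u₀‖_{L²(ℝ^d)}. -/
open MeasureTheory Complex
open scoped BigOperators ComplexConjugate

noncomputable section

abbrev ESp (d : ℕ) := EuclideanSpace ℝ (Fin d)

/-- Partial derivative in the `j`-th coordinate direction. -/
def pd {F : Type*} [NormedAddCommGroup F] [NormedSpace ℝ F] (d : ℕ) (j : Fin d)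
    (f : ESp d → F) : ESp d → F :=
  fun x => fderiv ℝ f x (EuclideanSpace.single j 1)

/-- The Laplacian. -/
def lap {F : Type*} [NormedAddCommGroup F] [NormedSpace ℝ F] (d : ℕ)
    (f : ESp d → F) : ESp d → F :=
  fun x => ∑ j : Fin d, pd d j (pd d j f) x

/-- The quantum harmonic oscillator `H f = -Δ f + |x|² f`. -/
def Hop {F : Type*} [NormedAddCommGroup F] [NormedSpace ℝ F] (d : ℕ)
    (f : ESp d → F) : ESp d → F :=
  fun x => - lap d f x + (‖x‖ ^ 2 : ℝ) • f x

/-- `e` is a Schwartz eigenfunction of `H` with eigenvalue `μ²`, `μ > 0`. -/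
def IsEigen {F : Type*} [NormedAddCommGroup F] [NormedSpace ℝ F] (d : ℕ) (μ : ℝ)
    (e : ESp d → F) : Prop :=
  0 < μ ∧ (∃ φ : SchwartzMap (ESp d) F, ⇑φ = e) ∧ ∀ x, Hop d e x = (μ ^ 2) • e x

/-- The family `e` with square-root eigenvalues `μ` is spectrally localized at scale `N`. -/
def Localized (d : ℕ) (N : ℝ) {m : ℕ} (μ : Fin m → ℝ) (e : Fin m → ESp d → ℂ) : Prop :=
  ∀ j, IsEigen d (μ j) (e j) ∧ N ≤ μ j ∧ μ j ≤ 2 * N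

/-- The linear Hermite–Schrödinger evolution `e^{-itH} (∑ⱼ eⱼ)`. -/
def evol {d m : ℕ} (μ : Fin m → ℝ) (e : Fin m → ESp d → ℂ) (t : ℝ) (x : ESp d) : ℂ :=
  ∑ j, Complex.exp (-(Complex.I * (t : ℂ) * ((μ j : ℂ)) ^ 2)) * e j x

/-- The `L²(ℝ^d)` norm. -/
def L2 {F : Type*} [NormedAddCommGroup F] (d : ℕ) (f : ESp d → F) : ℝ :=
  (∫ x : ESp d, ‖f x‖ ^ 2) ^ ((1 : ℝ) / 2)

/-- The space-time `L²([0,T] × ℝ^d)` norm. -/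
def stL2 (d : ℕ) (T : ℝ) (G : ℝ → ESp d → ℂ) : ℝ :=
  (∫ t in (0:ℝ)..T, ∫ x : ESp d, ‖G t x‖ ^ 2) ^ ((1 : ℝ) / 2)

/-- An admissible monomial operator: the composition `A₁ ∘ ⋯ ∘ A_k` where each `Aᵢ` is
either a coordinate partial derivative (`Bool` value `true`) or multiplication by a
coordinate function (`Bool` value `false`). The order is the length of the list. -/
def monOp (d : ℕ) : List (Bool × Fin d) → (ESp d → ℂ) → ESp d → ℂ
  | [], f => f
  | (b, j) :: rest, f =>
      let g := monOp d rest f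
      if b then pd d j g else fun x => ((x j : ℝ) : ℂ) * g x

/-!
On Schwartz space write `H = ∑ⱼ (xⱼ² - ∂ⱼ²)`. The commutation relations `[H, ∂ⱼ] = -2 xⱼ` and
`[H, xⱼ] = -2 ∂ⱼ` make `∂ⱼ + xⱼ` and `∂ⱼ - xⱼ` ladder operators, shifting eigenvalues of `H` by
`-2` and `+2`; so `∂ⱼ` and `xⱼ` map the span of the eigenfunctions with eigenvalues `≤ Λ` into the
span of those with eigenvalues `≤ Λ + 2`. Integration by parts gives
`‖∂ⱼ u‖² + ‖xⱼ u‖² ≤ ⟪H u, u⟫`, and since eigenspaces of the symmetric operator `H` are orthogonal,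
`⟪H u, u⟫ ≤ Λ ‖u‖²` on that span. Starting from `Λ = 4N²` and applying the `k` factors of `A` one
at a time gives `‖A u‖² ≤ (4N² + 2k)ᵏ ‖u‖² ≤ (4 + 2k)ᵏ N²ᵏ ‖u‖²`.
-/

open scoped InnerProductSpace

namespace Module.End

variable {𝕜 V E : Type*} [RCLike 𝕜] [AddCommGroup V] [Module 𝕜 V]

def spectralSubspace (T : End 𝕜 V) (Λ : ℝ) : Submodule 𝕜 V :=
  ⨆ a : Set.Iic Λ, eigenspace T ((a : ℝ) : 𝕜)

variable {T : End 𝕜 V}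

lemma eigenspace_le_spectralSubspace {a Λ : ℝ} (h : a ≤ Λ) :
    eigenspace T (a : 𝕜) ≤ spectralSubspace T Λ :=
  le_iSup_of_le (⟨a, h⟩ : Set.Iic Λ) le_rfl

lemma spectralSubspace_mono {Λ Λ' : ℝ} (h : Λ ≤ Λ') :
    spectralSubspace T Λ ≤ spectralSubspace T Λ' :=
  iSup_le fun a => eigenspace_le_spectralSubspace (a.2.trans h)

lemma apply_mem_eigenspace_add_of_mul_eq {R M : Type*} [CommRing R] [AddCommGroup M] [Module R M]
    {T L : End R M} {a c : R} (h : T * L = L * T + c • L) {v : M} (hv : v ∈ eigenspace T a) :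
    L v ∈ eigenspace T (a + c) := by
  rw [mem_eigenspace_iff] at hv ⊢
  have := congr($h v)
  simp only [mul_apply, LinearMap.add_apply, LinearMap.smul_apply, hv, map_smul] at this
  rw [this, add_smul]

lemma spectralSubspace_le_comap_of_mul_eq {L : End 𝕜 V} {c : ℝ}
    (h : T * L = L * T + (c : 𝕜) • L) (Λ : ℝ) :
    spectralSubspace T Λ ≤ (spectralSubspace T (Λ + c)).comap L :=
  iSup_le fun a v hv => by
    have := apply_mem_eigenspace_add_of_mul_eq h hv
    rw [← RCLike.ofReal_add] at this
    exact eigenspace_le_spectralSubspace (by linarith [a.2.out]) this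

variable [NormedAddCommGroup E] [InnerProductSpace 𝕜 E] (J : V →ₗ[𝕜] E)

lemma inner_eq_zero_of_mem_eigenspace
    (hT : ∀ v w, ⟪J (T v), J w⟫_𝕜 = ⟪J v, J (T w)⟫_𝕜) {a b : ℝ} (hab : a ≠ b) {v w : V}
    (hv : v ∈ eigenspace T (a : 𝕜)) (hw : w ∈ eigenspace T (b : 𝕜)) : ⟪J v, J w⟫_𝕜 = 0 := by
  rw [mem_eigenspace_iff] at hv hw
  have h := hT v w
  rw [hv, hw, map_smul, map_smul, inner_smul_left, inner_smul_right, RCLike.conj_ofReal] at h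
  have : ((a : 𝕜) - b) * ⟪J v, J w⟫_𝕜 = 0 := by rw [sub_mul, h, sub_self]
  exact (mul_eq_zero.mp this).resolve_left (sub_ne_zero.mpr (mod_cast hab))

lemma re_inner_apply_le_of_mem_spectralSubspace
    (hT : ∀ v w, ⟪J (T v), J w⟫_𝕜 = ⟪J v, J (T w)⟫_𝕜) {Λ : ℝ} {v : V}
    (hv : v ∈ spectralSubspace T Λ) :
    RCLike.re ⟪J (T v), J v⟫_𝕜 ≤ Λ * ‖J v‖ ^ 2 := by
  obtain ⟨f, hf, rfl⟩ := (Submodule.mem_iSup_iff_exists_finsupp _ _).mp hv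
  set g : Set.Iic Λ → E := fun a => J (f a)
  have hJ : J (f.sum fun _ x => x) = ∑ a ∈ f.support, g a := map_sum J _ _
  have hTJ : J (T (f.sum fun _ x => x)) = ∑ a ∈ f.support, ((a : ℝ) : 𝕜) • g a := by
    simp only [Finsupp.sum, map_sum, g, mem_eigenspace_iff.mp (hf _), map_smul]
  have hdiag : ∀ a ∈ f.support, ⟪g a, ∑ b ∈ f.support, g b⟫_𝕜 = (‖g a‖ ^ 2 : ℝ) := by
    intro a ha
    rw [inner_sum, Finset.sum_eq_single_of_mem a ha, inner_self_eq_norm_sq_to_K,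
      RCLike.ofReal_pow]
    intro b _ hba
    exact inner_eq_zero_of_mem_eigenspace J hT (fun h => hba (Subtype.ext h).symm) (hf a) (hf b)
  have hnorm : ‖J (f.sum fun _ x => x)‖ ^ 2 = ∑ a ∈ f.support, ‖g a‖ ^ 2 := by
    rw [hJ, ← inner_self_eq_norm_sq (𝕜 := 𝕜), sum_inner, map_sum]
    exact Finset.sum_congr rfl fun a ha => by rw [hdiag a ha, RCLike.ofReal_re]
  rw [hnorm, hTJ, hJ, sum_inner, map_sum, Finset.mul_sum]
  refine Finset.sum_le_sum fun a ha => ?_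
  rw [inner_smul_left, RCLike.conj_ofReal, hdiag a ha, ← RCLike.ofReal_mul, RCLike.ofReal_re]
  exact mul_le_mul_of_nonneg_right a.2 (sq_nonneg _)

end Module.End

open scoped SchwartzMap LineDeriv

namespace HarmonicOscillator

open Module End

variable {d : ℕ}

def partialDeriv (j : Fin d) : End ℂ 𝓢(ESp d, ℂ) :=
  (LineDeriv.lineDerivOpCLM ℂ 𝓢(ESp d, ℂ) (EuclideanSpace.single j (1 : ℝ))).toLinearMap

def coordMul (j : Fin d) : End ℂ 𝓢(ESp d, ℂ) :=
  (SchwartzMap.smulLeftCLM ℂ fun x : ESp d => ((x j : ℝ) : ℂ)).toLinearMap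

def hamiltonian (d : ℕ) : End ℂ 𝓢(ESp d, ℂ) :=
  ∑ j, (coordMul j * coordMul j - partialDeriv j * partialDeriv j)

lemma partialDeriv_apply (j : Fin d) (φ : 𝓢(ESp d, ℂ)) (x : ESp d) :
    partialDeriv j φ x = fderiv ℝ φ x (EuclideanSpace.single j 1) := rfl

lemma hasTemperateGrowth_coord (j : Fin d) :
    Function.HasTemperateGrowth fun x : ESp d => ((x j : ℝ) : ℂ) :=
  (Complex.ofRealCLM.comp (EuclideanSpace.proj j)).hasTemperateGrowth

lemma coordMul_apply (j : Fin d) (φ : 𝓢(ESp d, ℂ)) (x : ESp d) :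
    coordMul j φ x = (x j : ℂ) * φ x :=
  SchwartzMap.smulLeftCLM_apply_apply (hasTemperateGrowth_coord j) φ x

lemma partialDeriv_partialDeriv_apply (i j : Fin d) (φ : 𝓢(ESp d, ℂ)) (x : ESp d) :
    partialDeriv i (partialDeriv j φ) x
      = fderiv ℝ (fderiv ℝ φ) x (EuclideanSpace.single i 1) (EuclideanSpace.single j 1) := by
  have h : ∂^{![EuclideanSpace.single i (1 : ℝ), EuclideanSpace.single j 1]} φ x
      = partialDeriv i (partialDeriv j φ) x := by
    simp [LineDeriv.iteratedLineDerivOp_succ_left, LineDeriv.iteratedLineDerivOp_one,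
      partialDeriv]
  rw [← h, SchwartzMap.iteratedLineDerivOp_eq_iteratedFDeriv, iteratedFDeriv_two_apply]
  rfl

lemma partialDeriv_commute (i j : Fin d) : Commute (partialDeriv i) (partialDeriv j) := by
  ext φ x
  have hsymm : IsSymmSndFDerivAt ℝ φ x := φ.smooth'.contDiffAt.isSymmSndFDerivAt
    (by rw [minSmoothness_of_isRCLikeNormedField]; norm_cast)
  simp only [mul_apply, partialDeriv_partialDeriv_apply, hsymm.eq]

lemma coordMul_commute (i j : Fin d) : Commute (coordMul i) (coordMul j) := by
  ext φ x
  simp only [mul_apply, coordMul_apply]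
  ring

lemma partialDeriv_coordMul_apply (i j : Fin d) (φ : 𝓢(ESp d, ℂ)) (x : ESp d) :
    partialDeriv j (coordMul i φ) x
      = coordMul i (partialDeriv j φ) x + (if i = j then φ x else 0) := by
  have hc : HasFDerivAt (fun y : ESp d => ((y i : ℝ) : ℂ))
      (Complex.ofRealCLM.comp (EuclideanSpace.proj i)) x :=
    (Complex.ofRealCLM.comp (EuclideanSpace.proj i)).hasFDerivAt
  have hmul : ⇑(coordMul i φ) = fun y => ((y i : ℝ) : ℂ) * φ y :=
    funext (coordMul_apply i φ)
  rw [partialDeriv_apply, hmul, (hc.fun_mul (φ.hasFDerivAt x)).fderiv, coordMul_apply,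
    partialDeriv_apply]
  split_ifs with h <;> simp [h, add_comm]

lemma partialDeriv_mul_coordMul_self (j : Fin d) :
    partialDeriv j * coordMul j = coordMul j * partialDeriv j + 1 := by
  ext φ x
  simp [partialDeriv_coordMul_apply]

lemma partialDeriv_commute_coordMul {i j : Fin d} (h : i ≠ j) :
    Commute (partialDeriv j) (coordMul i) := by
  ext φ x
  simp [partialDeriv_coordMul_apply, h]

lemma hamiltonian_mul_sub_mul {L : End ℂ 𝓢(ESp d, ℂ)} (j : Fin d)
    (h : ∀ i ≠ j, Commute (coordMul i * coordMul i - partialDeriv i * partialDeriv i) L) :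
    hamiltonian d * L - L * hamiltonian d
      = (coordMul j * coordMul j - partialDeriv j * partialDeriv j) * L
        - L * (coordMul j * coordMul j - partialDeriv j * partialDeriv j) := by
  rw [hamiltonian, Finset.sum_mul, Finset.mul_sum, ← Finset.sum_sub_distrib,
    Finset.sum_eq_single j (fun i _ hij => sub_eq_zero.mpr (h i hij).eq) (by simp)]

lemma hamiltonian_mul_partialDeriv (j : Fin d) :
    hamiltonian d * partialDeriv j = partialDeriv j * hamiltonian d - (2 : ℂ) • coordMul j := by
  have hDX := partialDeriv_mul_coordMul_self j
  have key := hamiltonian_mul_sub_mul j fun i hij =>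
    have hX := partialDeriv_commute_coordMul hij
    have hD := partialDeriv_commute i j
    (hX.symm.mul_left hX.symm).sub_left (hD.mul_left hD)
  have hDXX : partialDeriv j * (coordMul j * coordMul j)
      = coordMul j * coordMul j * partialDeriv j + (2 : ℂ) • coordMul j := by
    rw [← mul_assoc, hDX, add_mul, mul_assoc, hDX, two_smul]
    noncomm_ring
  rw [sub_mul, mul_sub, hDXX] at key
  rw [sub_eq_add_neg, ← sub_eq_iff_eq_add', key, two_smul]
  noncomm_ring

lemma hamiltonian_mul_coordMul (j : Fin d) :
    hamiltonian d * coordMul j = coordMul j * hamiltonian d - (2 : ℂ) • partialDeriv j := by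
  have hDX := partialDeriv_mul_coordMul_self j
  have key := hamiltonian_mul_sub_mul j fun i hij =>
    have hX := coordMul_commute i j
    have hD := partialDeriv_commute_coordMul hij.symm
    (hX.mul_left hX).sub_left (hD.mul_left hD)
  have hDDX : partialDeriv j * partialDeriv j * coordMul j
      = coordMul j * (partialDeriv j * partialDeriv j) + (2 : ℂ) • partialDeriv j := by
    rw [mul_assoc, hDX, mul_add, ← mul_assoc, hDX, two_smul]
    noncomm_ring
  rw [sub_mul, mul_sub, hDDX] at key
  rw [sub_eq_add_neg, ← sub_eq_iff_eq_add', key, two_smul]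
  noncomm_ring

lemma hamiltonian_mul_lowering (j : Fin d) :
    hamiltonian d * (partialDeriv j + coordMul j)
      = (partialDeriv j + coordMul j) * hamiltonian d
        + ((-2 : ℝ) : ℂ) • (partialDeriv j + coordMul j) := by
  rw [mul_add, add_mul, hamiltonian_mul_partialDeriv, hamiltonian_mul_coordMul]
  push_cast
  module

lemma hamiltonian_mul_raising (j : Fin d) :
    hamiltonian d * (partialDeriv j - coordMul j)
      = (partialDeriv j - coordMul j) * hamiltonian d
        + ((2 : ℝ) : ℂ) • (partialDeriv j - coordMul j) := by
  rw [mul_sub, sub_mul, hamiltonian_mul_partialDeriv, hamiltonian_mul_coordMul]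
  push_cast
  module

lemma ladder_apply_mem_spectralSubspace (j : Fin d) (a b : ℂ) {Λ : ℝ} {φ : 𝓢(ESp d, ℂ)}
    (hφ : φ ∈ spectralSubspace (hamiltonian d) Λ) :
    (a • (partialDeriv j + coordMul j) + b • (partialDeriv j - coordMul j)) φ
      ∈ spectralSubspace (hamiltonian d) (Λ + 2) := by
  have hlow := spectralSubspace_le_comap_of_mul_eq (c := -2) (hamiltonian_mul_lowering j) Λ hφ
  have hup := spectralSubspace_le_comap_of_mul_eq (c := 2) (hamiltonian_mul_raising j) Λ hφ
  exact add_mem (Submodule.smul_mem _ a (spectralSubspace_mono (by linarith) hlow))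
    (Submodule.smul_mem _ b hup)

lemma partialDeriv_mem_spectralSubspace (j : Fin d) {Λ : ℝ} {φ : 𝓢(ESp d, ℂ)}
    (hφ : φ ∈ spectralSubspace (hamiltonian d) Λ) :
    partialDeriv j φ ∈ spectralSubspace (hamiltonian d) (Λ + 2) := by
  convert ladder_apply_mem_spectralSubspace j (1 / 2) (1 / 2) hφ using 2
  module

lemma coordMul_mem_spectralSubspace (j : Fin d) {Λ : ℝ} {φ : 𝓢(ESp d, ℂ)}
    (hφ : φ ∈ spectralSubspace (hamiltonian d) Λ) :
    coordMul j φ ∈ spectralSubspace (hamiltonian d) (Λ + 2) := by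
  convert ladder_apply_mem_spectralSubspace j (1 / 2) (-1 / 2) hφ using 2
  module

def toL2 (d : ℕ) : 𝓢(ESp d, ℂ) →ₗ[ℂ] Lp ℂ 2 (volume : Measure (ESp d)) :=
  (SchwartzMap.toLpCLM ℂ ℂ 2 volume).toLinearMap

lemma inner_toL2 (φ ψ : 𝓢(ESp d, ℂ)) :
    ⟪toL2 d φ, toL2 d ψ⟫_ℂ = ∫ x, conj (φ x) * ψ x := by
  simp [toL2, mul_comm]

lemma inner_toL2_coordMul (j : Fin d) (φ ψ : 𝓢(ESp d, ℂ)) :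
    ⟪toL2 d (coordMul j φ), toL2 d ψ⟫_ℂ = ⟪toL2 d φ, toL2 d (coordMul j ψ)⟫_ℂ := by
  simp only [inner_toL2, coordMul_apply, map_mul, Complex.conj_ofReal]
  congr 1 with x
  ring

lemma inner_toL2_partialDeriv (j : Fin d) (φ ψ : 𝓢(ESp d, ℂ)) :
    ⟪toL2 d (partialDeriv j φ), toL2 d ψ⟫_ℂ
      = -⟪toL2 d φ, toL2 d (partialDeriv j ψ)⟫_ℂ := by
  have h : ∫ x, conj (φ x) * partialDeriv j ψ x = -∫ x, conj (partialDeriv j φ x) * ψ x :=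
    SchwartzMap.integral_bilinear_lineDerivOp_right_eq_neg_left φ ψ
      ((ContinuousLinearMap.mul ℝ ℂ).comp Complex.conjCLE.toContinuousLinearMap) _
  rw [inner_toL2, inner_toL2, h, neg_neg]

lemma hamiltonian_apply (φ : 𝓢(ESp d, ℂ)) :
    hamiltonian d φ
      = ∑ j, (coordMul j (coordMul j φ) - partialDeriv j (partialDeriv j φ)) := by
  simp only [hamiltonian, LinearMap.sum_apply, LinearMap.sub_apply, mul_apply]

lemma inner_toL2_hamiltonian (φ ψ : 𝓢(ESp d, ℂ)) :
    ⟪toL2 d (hamiltonian d φ), toL2 d ψ⟫_ℂ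
      = ⟪toL2 d φ, toL2 d (hamiltonian d ψ)⟫_ℂ := by
  simp only [hamiltonian_apply, map_sum, map_sub, sum_inner, inner_sum, inner_sub_left,
    inner_sub_right, inner_toL2_coordMul, inner_toL2_partialDeriv, neg_neg]

lemma inner_toL2_hamiltonian_self (φ : 𝓢(ESp d, ℂ)) :
    ⟪toL2 d (hamiltonian d φ), toL2 d φ⟫_ℂ
      = ∑ j, ((‖toL2 d (coordMul j φ)‖ ^ 2 + ‖toL2 d (partialDeriv j φ)‖ ^ 2 : ℝ) : ℂ) := by
  simp only [hamiltonian_apply, map_sum, map_sub, sum_inner, inner_sub_left,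
    inner_toL2_coordMul, inner_toL2_partialDeriv, inner_self_eq_norm_sq_to_K, sub_neg_eq_add]
  norm_cast

lemma norm_toL2_sq_le_re_inner_hamiltonian (j : Fin d) (φ : 𝓢(ESp d, ℂ)) :
    ‖toL2 d (coordMul j φ)‖ ^ 2 + ‖toL2 d (partialDeriv j φ)‖ ^ 2
      ≤ RCLike.re ⟪toL2 d (hamiltonian d φ), toL2 d φ⟫_ℂ := by
  rw [inner_toL2_hamiltonian_self, ← Complex.ofReal_sum]
  exact Finset.single_le_sum
    (f := fun j => ‖toL2 d (coordMul j φ)‖ ^ 2 + ‖toL2 d (partialDeriv j φ)‖ ^ 2)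
    (fun i _ => by positivity) (Finset.mem_univ j)

def letterOp : Bool × Fin d → End ℂ 𝓢(ESp d, ℂ)
  | (true, j) => partialDeriv j
  | (false, j) => coordMul j

def monomial (A : List (Bool × Fin d)) : End ℂ 𝓢(ESp d, ℂ) :=
  (A.map letterOp).prod

lemma monomial_cons (l : Bool × Fin d) (A : List (Bool × Fin d)) :
    monomial (l :: A) = letterOp l * monomial A := by
  rw [monomial, List.map_cons, List.prod_cons, monomial]

lemma monOp_eq_monomial (A : List (Bool × Fin d)) (φ : 𝓢(ESp d, ℂ)) :
    monOp d A φ = monomial A φ := by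
  induction A with
  | nil => rfl
  | cons l A ih =>
    rw [monomial_cons, mul_apply]
    obtain ⟨_ | _, j⟩ := l
    · simp only [monOp, Bool.false_eq_true, if_false, ih, letterOp]
      exact (funext (coordMul_apply j _)).symm
    · simp only [monOp, if_true, ih, letterOp]
      rfl

lemma letterOp_mem_spectralSubspace (l : Bool × Fin d) {Λ : ℝ} {φ : 𝓢(ESp d, ℂ)}
    (hφ : φ ∈ spectralSubspace (hamiltonian d) Λ) :
    letterOp l φ ∈ spectralSubspace (hamiltonian d) (Λ + 2) := by
  obtain ⟨_ | _, j⟩ := l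
  · exact coordMul_mem_spectralSubspace j hφ
  · exact partialDeriv_mem_spectralSubspace j hφ

lemma norm_toL2_letterOp_sq_le (l : Bool × Fin d) {Λ : ℝ} {φ : 𝓢(ESp d, ℂ)}
    (hφ : φ ∈ spectralSubspace (hamiltonian d) Λ) :
    ‖toL2 d (letterOp l φ)‖ ^ 2 ≤ Λ * ‖toL2 d φ‖ ^ 2 := by
  refine le_trans ?_
    (re_inner_apply_le_of_mem_spectralSubspace (toL2 d) inner_toL2_hamiltonian hφ)
  obtain ⟨_ | _, j⟩ := l <;> simp only [letterOp] <;>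
    linarith [norm_toL2_sq_le_re_inner_hamiltonian j φ, sq_nonneg ‖toL2 d (coordMul j φ)‖,
      sq_nonneg ‖toL2 d (partialDeriv j φ)‖]

lemma monomial_mem_spectralSubspace (A : List (Bool × Fin d)) {Λ : ℝ} {φ : 𝓢(ESp d, ℂ)}
    (hφ : φ ∈ spectralSubspace (hamiltonian d) Λ) :
    monomial A φ ∈ spectralSubspace (hamiltonian d) (Λ + 2 * A.length) := by
  induction A with
  | nil => simpa [monomial] using hφ
  | cons l A ih =>
    rw [monomial_cons, mul_apply, List.length_cons]
    convert letterOp_mem_spectralSubspace l ih using 2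
    push_cast
    ring

lemma norm_toL2_monomial_sq_le (A : List (Bool × Fin d)) {Λ : ℝ} (hΛ : 0 ≤ Λ)
    {φ : 𝓢(ESp d, ℂ)} (hφ : φ ∈ spectralSubspace (hamiltonian d) Λ) :
    ‖toL2 d (monomial A φ)‖ ^ 2 ≤ (Λ + 2 * A.length) ^ A.length * ‖toL2 d φ‖ ^ 2 := by
  induction A with
  | nil => simp [monomial]
  | cons l A ih =>
    have hΛA : 0 ≤ Λ + 2 * A.length := by positivity
    calc ‖toL2 d (monomial (l :: A) φ)‖ ^ 2
        = ‖toL2 d (letterOp l (monomial A φ))‖ ^ 2 := by rw [monomial_cons, mul_apply]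
      _ ≤ (Λ + 2 * A.length) * ‖toL2 d (monomial A φ)‖ ^ 2 :=
          norm_toL2_letterOp_sq_le l (monomial_mem_spectralSubspace A hφ)
      _ ≤ (Λ + 2 * A.length) * ((Λ + 2 * A.length) ^ A.length * ‖toL2 d φ‖ ^ 2) := by
          gcongr
      _ ≤ (Λ + 2 * (l :: A).length) ^ (l :: A).length * ‖toL2 d φ‖ ^ 2 := by
          rw [← mul_assoc, ← pow_succ', List.length_cons]
          gcongr
          linarith

lemma hamiltonian_apply_apply (φ : 𝓢(ESp d, ℂ)) (x : ESp d) :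
    hamiltonian d φ x = Hop d φ x := by
  simp only [hamiltonian_apply, sum_apply, sub_apply, coordMul_apply, Hop, lap,
    EuclideanSpace.real_norm_sq_eq, Finset.sum_smul, Complex.real_smul]
  push_cast
  rw [Finset.sum_sub_distrib, sub_eq_neg_add]
  congr 1
  exact Finset.sum_congr rfl fun j _ => by ring

lemma mem_eigenspace_hamiltonian {μ : ℝ} {φ : 𝓢(ESp d, ℂ)} (h : IsEigen d μ φ) :
    φ ∈ eigenspace (hamiltonian d) ((μ ^ 2 : ℝ) : ℂ) := by
  rw [mem_eigenspace_iff]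
  ext x
  rw [hamiltonian_apply_apply, h.2.2, smul_apply, Complex.coe_smul]

lemma L2_eq_norm_toL2 (φ : 𝓢(ESp d, ℂ)) : L2 d φ = ‖toL2 d φ‖ := by
  rw [L2, toL2, ContinuousLinearMap.coe_coe, SchwartzMap.toLpCLM_apply,
    SchwartzMap.norm_toLp' (by norm_num) (by norm_num)]
  norm_num

lemma exists_mem_spectralSubspace_of_localized {N : ℝ} {m : ℕ} {μ : Fin m → ℝ}
    {e : Fin m → ESp d → ℂ} (he : Localized d N μ e) :
    ∃ φ : 𝓢(ESp d, ℂ), ⇑φ = (fun x => ∑ j, e j x)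
      ∧ φ ∈ spectralSubspace (hamiltonian d) (4 * N ^ 2) := by
  choose φ hφ using fun j => (he j).1.2.1
  have heig (j : Fin m) : φ j ∈ eigenspace (hamiltonian d) ((μ j ^ 2 : ℝ) : ℂ) :=
    mem_eigenspace_hamiltonian (by rw [hφ j]; exact (he j).1)
  have hle (j : Fin m) : μ j ^ 2 ≤ 4 * N ^ 2 := by nlinarith [(he j).1.1, (he j).2.2]
  refine ⟨∑ j, φ j, funext fun x => by simp [sum_apply, hφ], ?_⟩
  exact Submodule.sum_mem _ fun j _ => eigenspace_le_spectralSubspace (hle j) (heig j)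

end HarmonicOscillator

open Module End HarmonicOscillator

theorem stmt3_general (d k : ℕ) :
    ∃ C : ℝ, 0 < C ∧
      ∀ (N : ℝ), 1 ≤ N →
        ∀ (m : ℕ) (μ : Fin m → ℝ) (e : Fin m → ESp d → ℂ), Localized d N μ e →
        ∀ A : List (Bool × Fin d), A.length = k →
          L2 d (monOp d A (fun x => ∑ j, e j x))
            ≤ C * N ^ (k : ℝ) * L2 d (fun x => ∑ j, e j x) := by
  refine ⟨√((4 + 2 * k) ^ k), by positivity, fun N hN m μ e he A hA => ?_⟩
  subst hA
  obtain ⟨φ, hφe, hφ⟩ := exists_mem_spectralSubspace_of_localized he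
  rw [← hφe, monOp_eq_monomial, L2_eq_norm_toL2, L2_eq_norm_toL2, Real.rpow_natCast]
  refine le_of_pow_le_pow_left₀ two_ne_zero (by positivity) ?_
  calc ‖toL2 d (monomial A φ)‖ ^ 2
      ≤ (4 * N ^ 2 + 2 * A.length) ^ A.length * ‖toL2 d φ‖ ^ 2 :=
        norm_toL2_monomial_sq_le A (by positivity) hφ
    _ ≤ ((4 + 2 * A.length) * N ^ 2) ^ A.length * ‖toL2 d φ‖ ^ 2 := by
        gcongr
        nlinarith [one_le_pow₀ (n := 2) hN, A.length.cast_nonneg (α := ℝ)]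
    _ = (√((4 + 2 * A.length) ^ A.length) * N ^ A.length * ‖toL2 d φ‖) ^ 2 := by
        rw [mul_pow, mul_pow, mul_pow, Real.sq_sqrt (by positivity), ← pow_mul, ← pow_mul]
        ring

/-- Bernstein-type inequality: for `u₀` spectrally localized at scale `N` and `A` an
admissible monomial operator of order `k`, `‖A u₀‖_{L²} ≤ C N^k ‖u₀‖_{L²}`. -/
theorem stmt3 (d k : ℕ) (hd : 1 ≤ d) :
    ∃ C : ℝ, 0 < C ∧
      ∀ (N : ℝ), 1 ≤ N →
        ∀ (m : ℕ) (μ : Fin m → ℝ) (e : Fin m → ESp d → ℂ), Localized d N μ e →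
        ∀ A : List (Bool × Fin d), A.length = k →
          L2 d (monOp d A (fun x => ∑ j, e j x))
            ≤ C * N ^ (k : ℝ) * L2 d (fun x => ∑ j, e j x) :=
  stmt3_general d k
end
end

section
/- Let d ≥ 1 and k ∈ ℕ. There exists a constant C = C(d,k) > 0 such that for every N ≥ 1, every function u₀ spectrally localized at scale N, and every admissible monomial operator A of order k, the commutator of H with A satisfies ‖(H∘A − A∘H) u₀‖_{L²(ℝ^d)} ≤ C N^k ‖u₀‖_{L²(ℝ^d)}. -/
open MeasureTheory Complex
open scoped BigOperators ComplexConjugate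

noncomputable section

open scoped SchwartzMap LineDeriv InnerProductSpace ContDiff

/-!
The bound `‖A u₀‖ ≤ C N^k ‖u₀‖` for all monomials `A` of order `k` is proved by induction on `k`.
Write `A = a ∘ B` with `a` a single factor and put `g = B u₀`. Integration by parts gives
`⟪g, H g⟫ = ∑ⱼ (‖∂ⱼ g‖² + ‖xⱼ g‖²)`, hence `‖a g‖² ≤ ‖g‖ ‖H g‖`. Since `[H, ∂ⱼ] = -2xⱼ` and
`[H, xⱼ] = -2∂ⱼ`, `[H, B]` is `-2` times the sum of the monomials obtained from `B` by switching one
factor between `∂ⱼ` and `xⱼ`, all of order `k - 1`; and `‖H u₀‖ ≤ 4N² ‖u₀‖` because eigenfunctions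
with distinct eigenvalues are orthogonal. So `‖H g‖ ≤ ‖B (H u₀)‖ + ‖[H, B] u₀‖ ≲ N^(k+1) ‖u₀‖`, and
`‖a g‖ ≲ N^k ‖u₀‖`. The same formula for `[H, A]` then gives the theorem.
-/

section Orthogonal

variable {𝕜 E ι : Type*} [RCLike 𝕜] [NormedAddCommGroup E] [InnerProductSpace 𝕜 E]

theorem norm_sum_sq_eq_of_inner_eq_zero (s : Finset ι) (v : ι → E)
    (h : ∀ i ∈ s, ∀ j ∈ s, i ≠ j → ⟪v i, v j⟫_𝕜 = 0) :
    ‖∑ i ∈ s, v i‖ ^ 2 = ∑ i ∈ s, ‖v i‖ ^ 2 := by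
  classical
  have hdiag : ∀ i ∈ s, ∑ j ∈ s, ⟪v i, v j⟫_𝕜 = ⟪v i, v i⟫_𝕜 := fun i hi =>
    Finset.sum_eq_single i (fun j hj hji => h i hi j hj (Ne.symm hji)) (absurd hi)
  rw [@norm_sq_eq_re_inner 𝕜, sum_inner]
  simp only [inner_sum]
  rw [Finset.sum_congr rfl hdiag, map_sum]
  simp only [← @norm_sq_eq_re_inner 𝕜]

/-- Grouping the `vᵢ` by the value of `cᵢ` gives mutually orthogonal eigenspace components. -/
theorem norm_sum_smul_le_of_inner_eq_zero (s : Finset ι) (v : ι → E) (c : ι → ℝ) {b : ℝ}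
    (hc : ∀ i ∈ s, |c i| ≤ b) (h : ∀ i ∈ s, ∀ j ∈ s, c i ≠ c j → ⟪v i, v j⟫_𝕜 = 0) :
    ‖∑ i ∈ s, (c i : 𝕜) • v i‖ ≤ b * ‖∑ i ∈ s, v i‖ := by
  classical
  rcases s.eq_empty_or_nonempty with rfl | ⟨i₀, hi₀⟩
  · simp
  have hb : 0 ≤ b := (abs_nonneg _).trans (hc i₀ hi₀)
  set T := s.image c
  set w : ℝ → E := fun t => ∑ i ∈ s with c i = t, v i
  have hmaps : ∀ i ∈ s, c i ∈ T := fun i hi => Finset.mem_image_of_mem c hi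
  have hv : ∑ i ∈ s, v i = ∑ t ∈ T, w t := (Finset.sum_fiberwise_of_maps_to hmaps _).symm
  have hcv : ∑ i ∈ s, (c i : 𝕜) • v i = ∑ t ∈ T, (t : 𝕜) • w t := by
    rw [← Finset.sum_fiberwise_of_maps_to hmaps]
    refine Finset.sum_congr rfl fun t _ => ?_
    rw [Finset.smul_sum]
    exact Finset.sum_congr rfl fun i hi => by rw [(Finset.mem_filter.1 hi).2]
  have hw : ∀ t ∈ T, ∀ t' ∈ T, t ≠ t' → ⟪w t, w t'⟫_𝕜 = 0 := by
    intro t _ t' _ htt'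
    simp only [w, sum_inner, inner_sum]
    refine Finset.sum_eq_zero fun j hj => Finset.sum_eq_zero fun i hi => ?_
    rw [Finset.mem_filter] at hi hj
    exact h i hi.1 j hj.1 (by rw [hi.2, hj.2]; exact htt')
  have hsq : ‖∑ t ∈ T, (t : 𝕜) • w t‖ ^ 2 ≤ (b * ‖∑ t ∈ T, w t‖) ^ 2 := by
    rw [norm_sum_sq_eq_of_inner_eq_zero T _ fun t ht t' ht' htt' => by
        rw [inner_smul_left, inner_smul_right, hw t ht t' ht' htt', mul_zero, mul_zero],
      mul_pow, norm_sum_sq_eq_of_inner_eq_zero T w hw, Finset.mul_sum]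
    refine Finset.sum_le_sum fun t ht => ?_
    obtain ⟨i, hi, rfl⟩ := Finset.mem_image.1 ht
    rw [norm_smul, mul_pow, RCLike.norm_ofReal, sq_abs]
    have := sq_le_sq' (abs_le.1 (hc i hi)).1 (abs_le.1 (hc i hi)).2
    gcongr
  rw [hcv, hv]
  exact (pow_le_pow_iff_left₀ (norm_nonneg _) (by positivity) two_ne_zero).1 hsq

end Orthogonal

def IsSchwartz (d : ℕ) (f : ESp d → ℂ) : Prop := ∃ φ : 𝓢(ESp d, ℂ), ⇑φ = f

theorem normSq_smul_eq_sum {d : ℕ} (f : ESp d → ℂ) (x : ESp d) :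
    (‖x‖ ^ 2 : ℝ) • f x = ∑ i : Fin d, ((x i : ℝ) : ℂ) * (((x i : ℝ) : ℂ) * f x) := by
  rw [EuclideanSpace.real_norm_sq_eq, Finset.sum_smul]
  refine Finset.sum_congr rfl fun i _ => ?_
  rw [Complex.real_smul]
  push_cast
  ring

namespace IsSchwartz

variable {d : ℕ} {f g : ESp d → ℂ}

theorem contDiff (hf : IsSchwartz d f) : ContDiff ℝ ∞ f := by
  obtain ⟨φ, rfl⟩ := hf
  exact φ.smooth ⊤

theorem differentiable (hf : IsSchwartz d f) : Differentiable ℝ f := by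
  obtain ⟨φ, rfl⟩ := hf
  exact φ.differentiable

theorem add (hf : IsSchwartz d f) (hg : IsSchwartz d g) : IsSchwartz d (fun x => f x + g x) := by
  obtain ⟨φ, rfl⟩ := hf
  obtain ⟨ψ, rfl⟩ := hg
  exact ⟨φ + ψ, rfl⟩

theorem neg (hf : IsSchwartz d f) : IsSchwartz d (fun x => -f x) := by
  obtain ⟨φ, rfl⟩ := hf
  exact ⟨-φ, rfl⟩

theorem const_mul (c : ℂ) (hf : IsSchwartz d f) : IsSchwartz d (fun x => c * f x) := by
  obtain ⟨φ, rfl⟩ := hf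
  exact ⟨c • φ, rfl⟩

theorem real_smul (c : ℝ) (hf : IsSchwartz d f) : IsSchwartz d (fun x => c • f x) := by
  obtain ⟨φ, rfl⟩ := hf
  exact ⟨c • φ, rfl⟩

theorem sum {ι : Type*} (s : Finset ι) {F : ι → ESp d → ℂ} (h : ∀ i ∈ s, IsSchwartz d (F i)) :
    IsSchwartz d (fun x => ∑ i ∈ s, F i x) := by
  choose φ hφ using h
  refine ⟨∑ i ∈ s.attach, φ i.1 i.2, funext fun x => ?_⟩
  simp [hφ, s.sum_attach (fun i => F i x)]

theorem pd (hf : IsSchwartz d f) (j : Fin d) : IsSchwartz d (pd d j f) := by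
  obtain ⟨φ, rfl⟩ := hf
  exact ⟨∂_{(EuclideanSpace.single j (1 : ℝ) : ESp d)} φ, rfl⟩

theorem coord_mul (hf : IsSchwartz d f) (j : Fin d) :
    IsSchwartz d (fun x => ((x j : ℝ) : ℂ) * f x) := by
  obtain ⟨φ, rfl⟩ := hf
  have hx : Function.HasTemperateGrowth (fun x : ESp d => ((x j : ℝ) : ℂ)) :=
    (Complex.ofRealCLM.comp (EuclideanSpace.proj j)).hasTemperateGrowth
  exact ⟨SchwartzMap.smulLeftCLM ℂ (fun x : ESp d => ((x j : ℝ) : ℂ)) φ,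
    funext (SchwartzMap.smulLeftCLM_apply_apply hx φ)⟩

theorem normSq_smul (hf : IsSchwartz d f) : IsSchwartz d (fun x => (‖x‖ ^ 2 : ℝ) • f x) := by
  simp only [normSq_smul_eq_sum]
  exact sum _ fun i _ => (hf.coord_mul i).coord_mul i

theorem lap (hf : IsSchwartz d f) : IsSchwartz d (lap d f) :=
  sum _ fun j _ => (hf.pd j).pd j

theorem hop (hf : IsSchwartz d f) : IsSchwartz d (Hop d f) :=
  hf.lap.neg.add hf.normSq_smul

theorem monOp (hf : IsSchwartz d f) (L : List (Bool × Fin d)) : IsSchwartz d (monOp d L f) := by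
  induction L with
  | nil => exact hf
  | cons a L ih =>
    obtain ⟨_ | _, j⟩ := a
    exacts [ih.coord_mul j, ih.pd j]

end IsSchwartz

section Calculus

variable {d : ℕ} {f g : ESp d → ℂ}

theorem pd_add (hf : Differentiable ℝ f) (hg : Differentiable ℝ g) (j : Fin d) (x : ESp d) :
    pd d j (fun y => f y + g y) x = pd d j f x + pd d j g x := by
  simp only [pd, fderiv_fun_add (hf x) (hg x), add_apply]

theorem pd_sub (hf : Differentiable ℝ f) (hg : Differentiable ℝ g) (j : Fin d)
    (x : ESp d) : pd d j (fun y => f y - g y) x = pd d j f x - pd d j g x := by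
  simp only [pd, fderiv_fun_sub (hf x) (hg x), sub_apply]

theorem pd_neg (f : ESp d → ℂ) (j : Fin d) (x : ESp d) :
    pd d j (fun y => -f y) x = -pd d j f x := by
  simp only [pd, fderiv_fun_neg, neg_apply]

theorem pd_sum {ι : Type*} (s : Finset ι) {F : ι → ESp d → ℂ}
    (h : ∀ i ∈ s, Differentiable ℝ (F i)) (j : Fin d) (x : ESp d) :
    pd d j (fun y => ∑ i ∈ s, F i y) x = ∑ i ∈ s, pd d j (F i) x := by
  simp only [pd, fderiv_fun_sum (fun i hi => h i hi x), sum_apply]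

theorem pd_const_mul (hf : Differentiable ℝ f) (c : ℂ) (j : Fin d) (x : ESp d) :
    pd d j (fun y => c * f y) x = c * pd d j f x := by
  simp only [pd, fderiv_const_mul (hf x), smul_apply, smul_eq_mul]

theorem pd_real_smul (hf : Differentiable ℝ f) (c : ℝ) (j : Fin d) (x : ESp d) :
    pd d j (fun y => c • f y) x = c • pd d j f x := by
  simp only [pd, fderiv_fun_const_smul (hf x), smul_apply]

theorem pd_coord_mul (hf : Differentiable ℝ f) (i j : Fin d) (x : ESp d) :
    pd d j (fun y => ((y i : ℝ) : ℂ) * f y) x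
      = (if i = j then 1 else 0) * f x + ((x i : ℝ) : ℂ) * pd d j f x := by
  have hcoord : HasFDerivAt (fun y : ESp d => ((y i : ℝ) : ℂ))
      (Complex.ofRealCLM.comp (EuclideanSpace.proj i)) x :=
    (Complex.ofRealCLM.comp (EuclideanSpace.proj i)).hasFDerivAt
  rw [pd, (hcoord.fun_mul (hf x).hasFDerivAt).fderiv]
  by_cases hij : i = j
  · subst hij; simp [pd, add_comm]
  · simp [pd, hij]

theorem pd_normSq_smul (hf : Differentiable ℝ f) (j : Fin d) (x : ESp d) :
    pd d j (fun y => (‖y‖ ^ 2 : ℝ) • f y) x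
      = (2 * x j : ℝ) • f x + (‖x‖ ^ 2 : ℝ) • pd d j f x := by
  have hnorm : HasFDerivAt (fun y : ESp d => ‖y‖ ^ 2) (2 • innerSL ℝ x) x :=
    (hasStrictFDerivAt_norm_sq x).hasFDerivAt
  rw [pd, (hnorm.fun_smul (hf x).hasFDerivAt).fderiv]
  simp [pd, EuclideanSpace.inner_single_right, add_comm]

theorem pd_pd_comm (hf : IsSchwartz d f) (i j : Fin d) (x : ESp d) :
    pd d i (pd d j f) x = pd d j (pd d i f) x := by
  have hsymm : IsSymmSndFDerivAt ℝ f x :=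
    hf.contDiff.contDiffAt.isSymmSndFDerivAt <| by
      rw [minSmoothness_of_isRCLikeNormedField]
      exact ENat.LEInfty.out
  have hdiff : DifferentiableAt ℝ (fderiv ℝ f) x :=
    (hf.contDiff.fderiv_right (m := ∞) le_rfl).differentiable (by simp) x
  show pd d i (fun y => fderiv ℝ f y _) x = pd d j (fun y => fderiv ℝ f y _) x
  simp only [pd, fderiv_clm_apply hdiff (differentiableAt_const _), fderiv_const_apply,
    ContinuousLinearMap.comp_zero, zero_add, ContinuousLinearMap.flip_apply]
  exact hsymm _ _

end Calculus

section Oscillator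

variable {d : ℕ} {f : ESp d → ℂ}

theorem lap_pd (hf : IsSchwartz d f) (j : Fin d) (x : ESp d) :
    lap d (pd d j f) x = pd d j (lap d f) x := by
  unfold lap
  rw [pd_sum _ (fun i _ => ((hf.pd i).pd i).differentiable)]
  refine Finset.sum_congr rfl fun i _ => ?_
  rw [show pd d i (pd d j f) = pd d j (pd d i f) from funext (pd_pd_comm hf i j),
    pd_pd_comm (hf.pd i)]

theorem hop_pd (hf : IsSchwartz d f) (j : Fin d) (x : ESp d) :
    Hop d (pd d j f) x = pd d j (Hop d f) x - 2 * (((x j : ℝ) : ℂ) * f x) := by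
  unfold Hop
  rw [pd_add hf.lap.neg.differentiable hf.normSq_smul.differentiable, pd_neg,
    pd_normSq_smul hf.differentiable, lap_pd hf, Complex.real_smul, Complex.real_smul]
  push_cast
  ring

theorem lap_coord_mul (hf : IsSchwartz d f) (j : Fin d) (x : ESp d) :
    lap d (fun y => ((y j : ℝ) : ℂ) * f y) x = 2 * pd d j f x + ((x j : ℝ) : ℂ) * lap d f x := by
  have hpd : ∀ i, pd d i (fun y => ((y j : ℝ) : ℂ) * f y)
      = fun y => (if j = i then 1 else 0) * f y + ((y j : ℝ) : ℂ) * pd d i f y :=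
    fun i => funext (pd_coord_mul hf.differentiable j i)
  have hpdpd : ∀ i, pd d i (pd d i (fun y => ((y j : ℝ) : ℂ) * f y)) x
      = 2 * ((if j = i then 1 else 0) * pd d i f x) + ((x j : ℝ) : ℂ) * pd d i (pd d i f) x := by
    intro i
    rw [hpd, pd_add ((hf.const_mul _).differentiable) ((hf.pd i).coord_mul j).differentiable,
      pd_const_mul hf.differentiable, pd_coord_mul (hf.pd i).differentiable]
    ring
  simp only [lap, hpdpd, Finset.sum_add_distrib, ← Finset.mul_sum, ite_mul, one_mul, zero_mul,
    Finset.sum_ite_eq, Finset.mem_univ, if_true]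

theorem hop_coord_mul (hf : IsSchwartz d f) (j : Fin d) (x : ESp d) :
    Hop d (fun y => ((y j : ℝ) : ℂ) * f y) x = ((x j : ℝ) : ℂ) * Hop d f x - 2 * pd d j f x := by
  unfold Hop
  rw [lap_coord_mul hf, Complex.real_smul, Complex.real_smul]
  ring

theorem hop_sum {ι : Type*} (s : Finset ι) {F : ι → ESp d → ℂ}
    (h : ∀ i ∈ s, IsSchwartz d (F i)) (x : ESp d) :
    Hop d (fun y => ∑ i ∈ s, F i y) x = ∑ i ∈ s, Hop d (F i) x := by
  have hpd : ∀ j, pd d j (fun y => ∑ i ∈ s, F i y) = fun y => ∑ i ∈ s, pd d j (F i) y :=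
    fun j => funext (pd_sum s (fun i hi => (h i hi).differentiable) j)
  have hlap : lap d (fun y => ∑ i ∈ s, F i y) x = ∑ i ∈ s, lap d (F i) x := by
    simp only [lap, hpd, pd_sum s (fun i hi => ((h i hi).pd _).differentiable)]
    exact Finset.sum_comm
  simp only [Hop, hlap, Finset.smul_sum, ← Finset.sum_neg_distrib, ← Finset.sum_add_distrib]

theorem hop_real_smul (hf : IsSchwartz d f) (c : ℝ) (x : ESp d) :
    Hop d (fun y => c • f y) x = c • Hop d f x := by
  have hpd : ∀ j, pd d j (fun y => c • f y) = fun y => c • pd d j f y :=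
    fun j => funext (pd_real_smul hf.differentiable c j)
  simp only [Hop, lap, hpd, pd_real_smul (hf.pd _).differentiable, ← Finset.smul_sum]
  rw [smul_add, smul_neg, smul_comm]

end Oscillator

section Commutator

variable {d : ℕ} {f : ESp d → ℂ}

def flipFactor (L : List (Bool × Fin d)) (i : ℕ) : List (Bool × Fin d) :=
  L.modify i (Prod.map not id)

@[simp]
theorem length_flipFactor (L : List (Bool × Fin d)) (i : ℕ) : (flipFactor L i).length = L.length :=
  List.length_modify _ _ _

theorem hop_monOp (hf : IsSchwartz d f) (L : List (Bool × Fin d)) (x : ESp d) :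
    Hop d (monOp d L f) x
      = monOp d L (Hop d f) x - 2 * ∑ i : Fin L.length, monOp d (flipFactor L i) f x := by
  induction L generalizing x with
  | nil => simp [monOp]
  | cons a L ih =>
    obtain ⟨_ | _, j⟩ := a
    · have h0 : monOp d (flipFactor ((false, j) :: L) 0) f x = pd d j (monOp d L f) x := rfl
      have hsucc : ∀ i : Fin L.length, monOp d (flipFactor ((false, j) :: L) (i + 1)) f x
          = ((x j : ℝ) : ℂ) * monOp d (flipFactor L i) f x := fun i => rfl
      simp only [List.length_cons, Fin.sum_univ_succ, Fin.val_zero, Fin.val_succ, h0, hsucc,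
        ← Finset.mul_sum]
      show Hop d (fun y => ((y j : ℝ) : ℂ) * monOp d L f y) x = ((x j : ℝ) : ℂ) * _ - _
      rw [hop_coord_mul (hf.monOp L), ih]
      ring
    · have h0 : monOp d (flipFactor ((true, j) :: L) 0) f x
          = ((x j : ℝ) : ℂ) * monOp d L f x := rfl
      have hsucc : ∀ i : Fin L.length, monOp d (flipFactor ((true, j) :: L) (i + 1)) f x
          = pd d j (monOp d (flipFactor L i) f) x := fun i => rfl
      have hsum : IsSchwartz d fun y => ∑ i : Fin L.length, monOp d (flipFactor L i) f y :=
        IsSchwartz.sum _ fun i _ => hf.monOp _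
      simp only [List.length_cons, Fin.sum_univ_succ, Fin.val_zero, Fin.val_succ, h0, hsucc]
      show Hop d (pd d j (monOp d L f)) x = pd d j (monOp d L (Hop d f)) x - _
      rw [hop_pd (hf.monOp L), funext ih, pd_sub (hf.hop.monOp L).differentiable
        (hsum.const_mul 2).differentiable, pd_const_mul hsum.differentiable,
        pd_sum _ fun i _ => (hf.monOp _).differentiable]
      ring

end Commutator

section L2Space

variable {d : ℕ} {f g : ESp d → ℂ}

def L2inner (d : ℕ) (f g : ESp d → ℂ) : ℂ := ∫ x, conj (f x) * g x

theorem L2_eq_sqrt (f : ESp d → ℂ) : L2 d f = √(∫ x, ‖f x‖ ^ 2) := by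
  rw [L2, Real.sqrt_eq_rpow]

theorem L2_nonneg (f : ESp d → ℂ) : 0 ≤ L2 d f := by
  rw [L2_eq_sqrt]
  exact Real.sqrt_nonneg _

theorem L2_sq (f : ESp d → ℂ) : L2 d f ^ 2 = ∫ x, ‖f x‖ ^ 2 := by
  rw [L2_eq_sqrt, Real.sq_sqrt (integral_nonneg fun x => by positivity)]

theorem L2_coe (φ : 𝓢(ESp d, ℂ)) : L2 d φ = ‖φ.toLp 2‖ := by
  rw [SchwartzMap.norm_toLp' (by norm_num) (by norm_num), L2]
  norm_num

theorem L2inner_coe (φ ψ : 𝓢(ESp d, ℂ)) : L2inner d φ ψ = ⟪φ.toLp 2, ψ.toLp 2⟫_ℂ := by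
  simp [L2inner, mul_comm]

theorem L2_const_mul (c : ℂ) (f : ESp d → ℂ) : L2 d (fun x => c * f x) = ‖c‖ * L2 d f := by
  simp only [L2_eq_sqrt, norm_mul, mul_pow, integral_const_mul, Real.sqrt_mul (sq_nonneg _),
    Real.sqrt_sq (norm_nonneg c)]

theorem L2_sub_le (hf : IsSchwartz d f) (hg : IsSchwartz d g) :
    L2 d (fun x => f x - g x) ≤ L2 d f + L2 d g := by
  obtain ⟨φ, rfl⟩ := hf
  obtain ⟨ψ, rfl⟩ := hg
  rw [show (fun x => φ x - ψ x) = ⇑(φ - ψ) from rfl, L2_coe, L2_coe, L2_coe,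
    ← SchwartzMap.toLpCLM_apply (𝕜 := ℂ), map_sub]
  exact norm_sub_le _ _

theorem L2_sum_le {ι : Type*} [Fintype ι] {F : ι → ESp d → ℂ} (h : ∀ i, IsSchwartz d (F i)) :
    L2 d (fun x => ∑ i, F i x) ≤ ∑ i, L2 d (F i) := by
  choose φ hφ using h
  have hsum : (fun x => ∑ i, F i x) = ⇑(∑ i, φ i) := by
    ext x
    simp [hφ]
  rw [hsum, L2_coe, ← SchwartzMap.toLpCLM_apply (𝕜 := ℂ), map_sum]
  simp only [← hφ, L2_coe, SchwartzMap.toLpCLM_apply]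
  exact norm_sum_le _ _

theorem norm_L2inner_le (hf : IsSchwartz d f) (hg : IsSchwartz d g) :
    ‖L2inner d f g‖ ≤ L2 d f * L2 d g := by
  obtain ⟨φ, rfl⟩ := hf
  obtain ⟨ψ, rfl⟩ := hg
  rw [L2inner_coe, L2_coe, L2_coe]
  exact norm_inner_le_norm _ _

theorem L2inner_self (f : ESp d → ℂ) : L2inner d f f = ((L2 d f ^ 2 : ℝ) : ℂ) := by
  simp only [L2inner, L2_sq, ← integral_complex_ofReal, Complex.ofReal_pow, Complex.conj_mul']

theorem conj_L2inner (f g : ESp d → ℂ) : conj (L2inner d f g) = L2inner d g f := by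
  simp only [L2inner, ← integral_conj, map_mul, Complex.conj_conj, mul_comm]

end L2Space

section Energy

variable {d : ℕ} {f g : ESp d → ℂ}

theorem IsSchwartz.integrable_conj_mul (hf : IsSchwartz d f) (hg : IsSchwartz d g) :
    Integrable (fun x => conj (f x) * g x) := by
  obtain ⟨φ, rfl⟩ := hf
  obtain ⟨ψ, rfl⟩ := hg
  exact (ψ.integrable).bdd_mul (Complex.continuous_conj.comp φ.continuous).aestronglyMeasurable
    (.of_forall fun x => (RCLike.norm_conj _).trans_le (φ.norm_le_seminorm ℝ x))

theorem L2inner_pd_right (hf : IsSchwartz d f) (hg : IsSchwartz d g) (j : Fin d) :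
    L2inner d f (pd d j g) = -L2inner d (pd d j f) g := by
  obtain ⟨φ, rfl⟩ := hf
  obtain ⟨ψ, rfl⟩ := hg
  exact SchwartzMap.integral_bilinear_lineDerivOp_right_eq_neg_left φ ψ
    ((ContinuousLinearMap.mul ℝ ℂ).comp (Complex.conjCLE : ℂ →L[ℝ] ℂ)) _

theorem L2inner_coord_mul_right (f g : ESp d → ℂ) (j : Fin d) :
    L2inner d f (fun x => ((x j : ℝ) : ℂ) * g x)
      = L2inner d (fun x => ((x j : ℝ) : ℂ) * f x) g := by
  simp only [L2inner, map_mul, Complex.conj_ofReal, mul_left_comm, mul_assoc]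

theorem L2inner_hop_right (hf : IsSchwartz d f) (hg : IsSchwartz d g) :
    L2inner d f (Hop d g) = ∑ j, (L2inner d (pd d j f) (pd d j g)
      + L2inner d (fun x => ((x j : ℝ) : ℂ) * f x) (fun x => ((x j : ℝ) : ℂ) * g x)) := by
  have hpt : ∀ x, conj (f x) * Hop d g x = ∑ j, (-(conj (f x) * pd d j (pd d j g) x)
      + conj (f x) * (((x j : ℝ) : ℂ) * (((x j : ℝ) : ℂ) * g x))) := by
    intro x
    rw [Hop, lap, normSq_smul_eq_sum, mul_add, mul_neg, Finset.mul_sum, Finset.mul_sum,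
      ← Finset.sum_neg_distrib, ← Finset.sum_add_distrib]
  have hint : ∀ j, Integrable (fun x => -(conj (f x) * pd d j (pd d j g) x)) ∧
      Integrable (fun x => conj (f x) * (((x j : ℝ) : ℂ) * (((x j : ℝ) : ℂ) * g x))) :=
    fun j => ⟨(hf.integrable_conj_mul ((hg.pd j).pd j)).neg,
      hf.integrable_conj_mul ((hg.coord_mul j).coord_mul j)⟩
  simp only [L2inner, hpt]
  rw [integral_finsetSum _ fun j _ => (hint j).1.fun_add (hint j).2]
  refine Finset.sum_congr rfl fun j _ => ?_
  rw [integral_add (hint j).1 (hint j).2, integral_neg]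
  have hibp := L2inner_pd_right hf (hg.pd j) j
  have hcoord := L2inner_coord_mul_right f (fun x => ((x j : ℝ) : ℂ) * g x) j
  simp only [L2inner] at hibp hcoord
  rw [hibp, hcoord, neg_neg]

theorem L2inner_hop_symm (hf : IsSchwartz d f) (hg : IsSchwartz d g) :
    L2inner d (Hop d f) g = L2inner d f (Hop d g) := by
  rw [← conj_L2inner, L2inner_hop_right hg hf, L2inner_hop_right hf hg, map_sum]
  simp only [map_add, conj_L2inner]

theorem L2inner_hop_self (hf : IsSchwartz d f) :
    L2inner d f (Hop d f) = ∑ j, ((L2 d (pd d j f) ^ 2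
      + L2 d (fun x => ((x j : ℝ) : ℂ) * f x) ^ 2 : ℝ) : ℂ) := by
  simp only [L2inner_hop_right hf hf, L2inner_self, Complex.ofReal_add]

theorem L2_monOp_singleton_sq_le (hf : IsSchwartz d f) (a : Bool × Fin d) :
    L2 d (monOp d [a] f) ^ 2 ≤ L2 d f * L2 d (Hop d f) := by
  have henergy : L2 d (monOp d [a] f) ^ 2 ≤ (L2inner d f (Hop d f)).re := by
    rw [L2inner_hop_self hf, Complex.re_sum]
    simp only [Complex.ofReal_re]
    obtain ⟨b, j⟩ := a
    refine le_trans ?_ (Finset.single_le_sum (fun i _ => by positivity) (Finset.mem_univ j))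
    cases b
    · exact le_add_of_nonneg_left (sq_nonneg _)
    · exact le_add_of_nonneg_right (sq_nonneg _)
  exact henergy.trans ((Complex.re_le_norm _).trans (norm_L2inner_le hf hf.hop))

end Energy

section Spectral

variable {d : ℕ} {f g : ESp d → ℂ}

theorem L2inner_eq_zero_of_hop_eq_smul (hf : IsSchwartz d f) (hg : IsSchwartz d g) {a b : ℝ}
    (hHf : ∀ x, Hop d f x = a • f x) (hHg : ∀ x, Hop d g x = b • g x) (hab : a ≠ b) :
    L2inner d f g = 0 := by
  have hleft : L2inner d (Hop d f) g = a * L2inner d f g := by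
    simp only [L2inner, hHf, Complex.real_smul, map_mul, Complex.conj_ofReal, ← integral_const_mul,
      mul_assoc]
  have hright : L2inner d f (Hop d g) = b * L2inner d f g := by
    simp only [L2inner, hHg, Complex.real_smul, ← integral_const_mul, mul_left_comm]
  have hsymm := L2inner_hop_symm hf hg
  rw [hleft, hright] at hsymm
  exact (mul_eq_mul_right_iff.1 hsymm).resolve_left (mod_cast hab)

theorem L2_sum_smul_le_of_hop_eq_smul {ι : Type*} [Fintype ι] {e : ι → ESp d → ℂ} {c : ι → ℝ}
    {b : ℝ} (he : ∀ i, IsSchwartz d (e i)) (hH : ∀ i x, Hop d (e i) x = c i • e i x)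
    (hc : ∀ i, |c i| ≤ b) :
    L2 d (fun x => ∑ i, c i • e i x) ≤ b * L2 d (fun x => ∑ i, e i x) := by
  have horth : ∀ i j, c i ≠ c j → L2inner d (e i) (e j) = 0 := fun i j =>
    L2inner_eq_zero_of_hop_eq_smul (he i) (he j) (hH i) (hH j)
  choose φ hφ using he
  have hsum : (fun x => ∑ i, e i x) = ⇑(∑ i, φ i) := by
    ext x
    simp [hφ]
  have hsmul : (fun x => ∑ i, c i • e i x) = ⇑(∑ i, (c i : ℂ) • φ i) := by
    ext x
    simp [hφ, Complex.real_smul]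
  rw [hsum, hsmul, L2_coe, L2_coe]
  simp only [← SchwartzMap.toLpCLM_apply (𝕜 := ℂ), map_sum, map_smul]
  simp only [SchwartzMap.toLpCLM_apply]
  refine norm_sum_smul_le_of_inner_eq_zero _ _ c (fun i _ => hc i) fun i _ j _ hij => ?_
  rw [← L2inner_coe, hφ, hφ]
  exact horth i j hij

end Spectral

namespace Localized

variable {d m : ℕ} {N : ℝ} {μ : Fin m → ℝ} {e : Fin m → ESp d → ℂ}

theorem isSchwartz (hloc : Localized d N μ e) (j : Fin m) : IsSchwartz d (e j) :=
  (hloc j).1.2.1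

theorem isSchwartz_sum (hloc : Localized d N μ e) : IsSchwartz d (fun x => ∑ j, e j x) :=
  IsSchwartz.sum _ fun j _ => hloc.isSchwartz j

theorem hop_sum (hloc : Localized d N μ e) (x : ESp d) :
    Hop d (fun y => ∑ j, e j y) x = ∑ j, (μ j ^ 2 : ℝ) • e j x := by
  rw [_root_.hop_sum _ fun j _ => hloc.isSchwartz j]
  exact Finset.sum_congr rfl fun j _ => (hloc j).1.2.2 x

theorem eigenvalue_smul (hloc : Localized d N μ e) :
    Localized d N μ (fun j x => (μ j ^ 2 : ℝ) • e j x) := fun j =>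
  ⟨⟨(hloc j).1.1, (hloc.isSchwartz j).real_smul _, fun x => by
    rw [hop_real_smul (hloc.isSchwartz j), (hloc j).1.2.2 x, smul_comm]⟩, (hloc j).2⟩

theorem L2_sum_eigenvalue_smul_le (hloc : Localized d N μ e) :
    L2 d (fun x => ∑ j, (μ j ^ 2 : ℝ) • e j x) ≤ 4 * N ^ 2 * L2 d (fun x => ∑ j, e j x) := by
  refine L2_sum_smul_le_of_hop_eq_smul hloc.isSchwartz (fun j => (hloc j).1.2.2) fun j => ?_
  rw [abs_of_nonneg (sq_nonneg _), show 4 * N ^ 2 = (2 * N) ^ 2 by ring]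
  exact pow_le_pow_left₀ (hloc j).1.1.le (hloc j).2.2 2

end Localized

def MonomialBound (d k : ℕ) (C : ℝ) : Prop :=
  ∀ N : ℝ, 1 ≤ N → ∀ (m : ℕ) (μ : Fin m → ℝ) (e : Fin m → ESp d → ℂ), Localized d N μ e →
    ∀ A : List (Bool × Fin d), A.length = k →
      L2 d (monOp d A (fun x => ∑ j, e j x)) ≤ C * N ^ k * L2 d (fun x => ∑ j, e j x)

theorem monomialBound_zero (d : ℕ) : MonomialBound d 0 1 := by
  intro N _ m μ e _ A hA
  rw [List.length_eq_zero_iff.1 hA]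
  simp [monOp]

namespace MonomialBound

variable {d k m : ℕ} {C N : ℝ} {μ : Fin m → ℝ} {e : Fin m → ESp d → ℂ} {A : List (Bool × Fin d)}

theorem L2_sum_flipFactor_le (hC : MonomialBound d k C) (hN : 1 ≤ N) (hloc : Localized d N μ e)
    (hA : A.length = k) :
    L2 d (fun x => ∑ i : Fin A.length, monOp d (flipFactor A i) (fun y => ∑ j, e j y) x)
      ≤ k * (C * N ^ k * L2 d (fun x => ∑ j, e j x)) := by
  refine (L2_sum_le fun i => hloc.isSchwartz_sum.monOp _).trans ?_
  refine (Finset.sum_le_sum fun i _ => hC N hN m μ e hloc _ (by simp [hA])).trans ?_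
  simp [hA]

theorem L2_hop_monOp_le (hC : MonomialBound d k C) (hC0 : 0 ≤ C) (hN : 1 ≤ N)
    (hloc : Localized d N μ e) (hA : A.length = k) :
    L2 d (Hop d (monOp d A (fun x => ∑ j, e j x)))
      ≤ C * (4 + 2 * k) * N ^ (k + 2) * L2 d (fun x => ∑ j, e j x) := by
  set u : ESp d → ℂ := fun x => ∑ j, e j x
  have hu : IsSchwartz d u := hloc.isSchwartz_sum
  have hHu : L2 d (monOp d A (Hop d u)) ≤ C * N ^ k * (4 * N ^ 2 * L2 d u) := by
    rw [funext hloc.hop_sum]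
    exact (hC N hN m μ _ hloc.eigenvalue_smul A hA).trans
      (mul_le_mul_of_nonneg_left hloc.L2_sum_eigenvalue_smul_le (by positivity))
  have hflip := hC.L2_sum_flipFactor_le hN hloc hA
  have hk := mul_le_mul_of_nonneg_left (pow_le_pow_right₀ hN (by omega : k ≤ k + 2))
    (mul_nonneg (mul_nonneg (by positivity : (0 : ℝ) ≤ 2 * k) hC0) (L2_nonneg u))
  rw [funext (hop_monOp hu A)]
  have hsum := IsSchwartz.sum Finset.univ fun (i : Fin A.length) _ => hu.monOp (flipFactor A i)
  refine (L2_sub_le (hu.hop.monOp A) (hsum.const_mul 2)).trans ?_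
  rw [L2_const_mul, Complex.norm_ofNat]
  calc _ ≤ C * N ^ k * (4 * N ^ 2 * L2 d u) + 2 * (k * (C * N ^ k * L2 d u)) := by gcongr
    _ ≤ C * (4 + 2 * k) * N ^ (k + 2) * L2 d u := by
      rw [pow_add] at hk ⊢
      linarith

theorem succ (hC : MonomialBound d k C) (hC0 : 0 ≤ C) :
    MonomialBound d (k + 1) (C * √(4 + 2 * k)) := by
  intro N hN m μ e hloc A hA
  obtain _ | ⟨a, A⟩ := A
  · simp at hA
  replace hA : A.length = k := by simpa using hA
  set u : ESp d → ℂ := fun x => ∑ j, e j x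
  have hu0 := L2_nonneg u
  have hsq : L2 d (monOp d [a] (monOp d A u)) ^ 2
      ≤ (C * √(4 + 2 * k) * N ^ (k + 1) * L2 d u) ^ 2 := by
    calc _ ≤ L2 d (monOp d A u) * L2 d (Hop d (monOp d A u)) :=
          L2_monOp_singleton_sq_le (hloc.isSchwartz_sum.monOp A) a
      _ ≤ C * N ^ k * L2 d u * (C * (4 + 2 * k) * N ^ (k + 2) * L2 d u) :=
          mul_le_mul (hC N hN m μ e hloc A hA) (hC.L2_hop_monOp_le hC0 hN hloc hA)
            (L2_nonneg _) (by positivity)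
      _ = _ := by
        rw [mul_pow, mul_pow, mul_pow, Real.sq_sqrt (by positivity)]
        ring
  exact (pow_le_pow_iff_left₀ (L2_nonneg _) (by positivity) two_ne_zero).1 hsq

end MonomialBound

theorem exists_monomialBound (d k : ℕ) : ∃ C, 0 ≤ C ∧ MonomialBound d k C := by
  induction k with
  | zero => exact ⟨1, zero_le_one, monomialBound_zero d⟩
  | succ k ih =>
    obtain ⟨C, hC0, hC⟩ := ih
    exact ⟨_, by positivity, hC.succ hC0⟩

theorem stmt4_general (d k : ℕ) :
    ∃ C : ℝ, 0 < C ∧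
      ∀ (N : ℝ), 1 ≤ N →
        ∀ (m : ℕ) (μ : Fin m → ℝ) (e : Fin m → ESp d → ℂ), Localized d N μ e →
        ∀ A : List (Bool × Fin d), A.length = k →
          L2 d (fun x =>
              Hop d (monOp d A (fun y => ∑ j, e j y)) x
                - monOp d A (fun y => Hop d (fun z => ∑ j, e j z) y) x)
            ≤ C * N ^ (k : ℝ) * L2 d (fun x => ∑ j, e j x) := by
  obtain ⟨C, hC0, hC⟩ := exists_monomialBound d k
  refine ⟨2 * k * C + 1, by positivity, fun N hN m μ e hloc A hA => ?_⟩
  have hcomm : (fun x => Hop d (monOp d A (fun y => ∑ j, e j y)) x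
        - monOp d A (fun y => Hop d (fun z => ∑ j, e j z) y) x)
      = fun x => -2 * ∑ i : Fin A.length, monOp d (flipFactor A i) (fun y => ∑ j, e j y) x :=
    funext fun x => by rw [hop_monOp hloc.isSchwartz_sum]; ring
  rw [hcomm, L2_const_mul, norm_neg, Complex.norm_ofNat, Real.rpow_natCast]
  have hflip := hC.L2_sum_flipFactor_le hN hloc hA
  have hu0 := L2_nonneg (fun x => ∑ j, e j x)
  have hX : 0 ≤ N ^ k * L2 d (fun x => ∑ j, e j x) := by positivity
  linarith

/-- Commutator bound: for `u₀` spectrally localized at scale `N` and `A` an admissible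
monomial operator of order `k`, `‖(H∘A − A∘H) u₀‖_{L²} ≤ C N^k ‖u₀‖_{L²}`. -/
theorem stmt4 (d k : ℕ) (hd : 1 ≤ d) :
    ∃ C : ℝ, 0 < C ∧
      ∀ (N : ℝ), 1 ≤ N →
        ∀ (m : ℕ) (μ : Fin m → ℝ) (e : Fin m → ESp d → ℂ), Localized d N μ e →
        ∀ A : List (Bool × Fin d), A.length = k →
          L2 d (fun x =>
              Hop d (monOp d A (fun y => ∑ j, e j y)) x
                - monOp d A (fun y => Hop d (fun z => ∑ j, e j z) y) x)
            ≤ C * N ^ (k : ℝ) * L2 d (fun x => ∑ j, e j x) :=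
  stmt4_general d k
end
end
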